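/- arXiv:hep-th/0312276 — 6 statements merged into one kernel-verified Lean document; each statement's English description precedes it below -/
import Mathlib

section
/- For any nonzero matrix M ∈ M_{n×m}(ℂ), the set of all fluctuations {Σ_j r_j u_j M v_j : r_j ∈ ℝ, u_j ∈ U(n), v_j ∈ U(m), finite sums} equals all of M_{n×m}(ℂ). -/
/-!
Every element of a unital C⋆-algebra is a complex combination of four unitaries, and a unimodular
scalar can be absorbed into a unitary, so the real span of the unitary group is the whole matrix
algebra. By bilinearity, the real span of the fluctuations of `M` then contains every `A * M * B`;
for an entry `M p q ≠ 0` these include all matrix units `E i j = E i p * M * E q j / M p q`.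
-/

open Matrix Submodule

lemma CStarAlgebra.span_real_unitary (A : Type*) [CStarAlgebra A] :
    span ℝ (unitary A : Set A) = ⊤ := by
  rw [eq_top_iff]
  rintro x -
  obtain ⟨u, c, rfl, -⟩ := CStarAlgebra.exists_sum_four_unitary x
  refine sum_mem fun i _ ↦ ?_
  have hIu : Complex.I • (u i : A) ∈ unitary A :=
    Unitary.smul_mem_of_mem (by simp [Unitary.mem_iff]) (u i).2
  rw [← Complex.re_add_im (c i), add_smul, mul_smul, Complex.coe_smul, Complex.coe_smul]
  exact add_mem (smul_mem _ _ (subset_span (u i).2)) (smul_mem _ _ (subset_span hIu))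

lemma Matrix.span_real_unitaryGroup (n : Type*) [Fintype n] [DecidableEq n] :
    span ℝ (unitaryGroup n ℂ : Set (Matrix n n ℂ)) = ⊤ :=
  letI := Matrix.instCStarAlgebra (n := n)
  CStarAlgebra.span_real_unitary _

section

variable {n m : Type*} [Fintype n] [DecidableEq n] [Fintype m] [DecidableEq m]

lemma Matrix.mul_mul_mem_span_unitaryGroup_mul_mul (M : Matrix n m ℂ) (A : Matrix n n ℂ)
    (B : Matrix m m ℂ) :
    A * M * B ∈ span ℝ {X | ∃ u ∈ unitaryGroup n ℂ, ∃ v ∈ unitaryGroup m ℂ, X = u * M * v} := by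
  let f : Matrix n n ℂ →ₗ[ℝ] Matrix m m ℂ →ₗ[ℝ] Matrix n m ℂ :=
    LinearMap.mk₂ ℝ (fun A B ↦ A * M * B) (fun _ _ _ ↦ by simp only [Matrix.add_mul])
      (fun _ _ _ ↦ by simp only [Matrix.smul_mul]) (fun _ _ _ ↦ by simp only [Matrix.mul_add])
      (fun _ _ _ ↦ by simp only [Matrix.mul_smul])
  have hspan : span ℝ {X | ∃ u ∈ unitaryGroup n ℂ, ∃ v ∈ unitaryGroup m ℂ, X = u * M * v} =
      map₂ f ⊤ ⊤ := by
    rw [← span_real_unitaryGroup, ← span_real_unitaryGroup, map₂_span_span]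
    congr 1
    ext X
    simp [f, eq_comm]
  rw [hspan]
  exact apply_mem_map₂ f mem_top mem_top

end

/-- For a nonzero `M ∈ M_{n×m}(ℂ)`, the set of fluctuations (finite real linear
combinations of `u * M * v` with unitaries `u, v`) is all of `M_{n×m}(ℂ)`. -/
theorem span_fluctuations_eq_top (n m : ℕ) (M : Matrix (Fin n) (Fin m) ℂ) (hM : M ≠ 0) :
    Submodule.span ℝ
      {X : Matrix (Fin n) (Fin m) ℂ |
        ∃ u ∈ Matrix.unitaryGroup (Fin n) ℂ, ∃ v ∈ Matrix.unitaryGroup (Fin m) ℂ,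
          X = u * M * v} = ⊤ := by
  obtain ⟨p, q, hpq⟩ : ∃ p q, M p q ≠ 0 := by
    by_contra! h
    exact hM (Matrix.ext h)
  rw [eq_top_iff]
  rintro X -
  rw [matrix_eq_sum_single X]
  refine sum_mem fun i _ ↦ sum_mem fun j _ ↦ ?_
  have hsingle : single i p (X i j / M p q) * M * single q j (1 : ℂ) = single i j (X i j) := by
    rw [single_mul_mul_single, mul_one, div_mul_cancel₀ _ hpq]
  exact hsingle ▸ mul_mul_mem_span_unitaryGroup_mul_mul M _ _
end

section
/- Given k ℝ-linearly independent real matrices M_1, ..., M_k ∈ M_{n×m}(ℝ), there exists a fluctuation f (a finite family of real coefficients r_j and orthogonal matrices u_j ∈ O(n), v_j ∈ O(m)) such that M_1^f := Σ_j r_j u_j M_1 v_j ≠ 0 while M_i^f := Σ_j r_j u_j M_i v_j = 0 for all i ≠ 1. -/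
/-!
Every linear endomorphism of the space of `n × m` matrices is a fluctuation
`X ↦ ∑ j, r j • u j * X * v j`. Indeed the sandwiches `X ↦ A * X * B` span all endomorphisms
(those built from matrix units are the elementary ones), they are bilinear in `(A, B)`, and the
orthogonal matrices span all square matrices. It remains to apply this to `X ↦ φ X • M₁`, where
`φ` is a linear functional vanishing on `M₂, …, Mₖ` but not on `M₁`.
-/

theorem LinearIndependent.exists_dual_ne_zero_and_eq_zero {K V ι : Type*} [Field K]
    [AddCommGroup V] [Module K V] {M : ι → V} (hM : LinearIndependent K M) (i : ι) :
    ∃ φ : Module.Dual K V, φ (M i) ≠ 0 ∧ ∀ j, j ≠ i → φ (M j) = 0 := by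
  obtain ⟨φ, hφi, hφ⟩ := Submodule.exists_dual_map_eq_bot_of_notMem
    (hM.notMem_span_image (Set.notMem_compl_iff.2 (Set.mem_singleton i))) inferInstance
  refine ⟨φ, hφi, fun j hj => ?_⟩
  rw [Submodule.map_span, Submodule.span_eq_bot] at hφ
  exact hφ _ ⟨M j, Set.mem_image_of_mem M hj, rfl⟩

namespace Matrix

variable {ι κ : Type*} [Fintype ι] [Fintype κ]

section Sandwich

variable (R : Type*) [CommRing R]

def sandwich : Matrix ι ι R →ₗ[R] Matrix κ κ R →ₗ[R] Module.End R (Matrix ι κ R) :=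
  LinearMap.mk₂ R (fun A B => (mulRightLinearMap ι R B).comp (mulLeftLinearMap κ R A))
    (fun _ _ _ => LinearMap.ext fun _ => by simp [Matrix.add_mul])
    (fun _ _ _ => LinearMap.ext fun _ => by simp)
    (fun _ _ _ => LinearMap.ext fun _ => by simp [Matrix.mul_add])
    (fun _ _ _ => LinearMap.ext fun _ => by simp)

variable {R}

@[simp]
theorem sandwich_apply (A : Matrix ι ι R) (B : Matrix κ κ R) (X : Matrix ι κ R) :
    sandwich R A B X = A * X * B := rfl

variable [DecidableEq ι] [DecidableEq κ]

theorem stdBasis_end_eq_sandwich (a b : ι) (c d : κ) :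
    (stdBasis R ι κ).end ((a, d), (b, c)) = sandwich R (single a b 1) (single c d 1) := by
  refine (stdBasis R ι κ).ext fun ⟨b', c'⟩ => ?_
  rw [Module.Basis.end_apply_apply, sandwich_apply, stdBasis_eq_single, stdBasis_eq_single,
    single_mul_mul_single]
  simp only [single_apply, Prod.ext_iff]
  split_ifs <;> simp_all

theorem map₂_sandwich_top_top :
    Submodule.map₂ (sandwich R) ⊤ ⊤ = (⊤ : Submodule R (Module.End R (Matrix ι κ R))) := by
  rw [eq_top_iff, ← (stdBasis R ι κ).end.span_eq, Submodule.span_le]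
  rintro _ ⟨⟨⟨a, d⟩, ⟨b, c⟩⟩, rfl⟩
  rw [stdBasis_end_eq_sandwich]
  exact Submodule.apply_mem_map₂ _ trivial trivial

end Sandwich

section Orthogonal

attribute [local instance] starRingOfComm

variable [DecidableEq ι]

theorem permMatrix_mem_orthogonalGroup {R : Type*} [CommRing R] (σ : Equiv.Perm ι) :
    σ.permMatrix R ∈ orthogonalGroup ι R := by
  rw [mem_orthogonalGroup_iff', transpose_permMatrix, ← permMatrix_mul, mul_inv_cancel,
    permMatrix_one]

theorem one_sub_two_smul_single_mem_orthogonalGroup {R : Type*} [CommRing R] (a : ι) :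
    1 - (2 : R) • single a a 1 ∈ orthogonalGroup ι R := by
  rw [mem_orthogonalGroup_iff', transpose_sub, transpose_one, transpose_smul, transpose_single]
  simp only [sub_mul, mul_sub, single_mul_single_same, mul_one, one_mul, smul_mul_assoc,
    mul_smul_comm]
  module

theorem single_mul_permMatrix_swap {R : Type*} [CommRing R] (a b : ι) :
    single a a (1 : R) * (Equiv.swap a b).permMatrix R = single a b 1 := by
  ext i j
  simp only [PEquiv.mul_toMatrix_toPEquiv, submatrix_apply, id, Equiv.symm_swap, single_apply,
    ← Equiv.swap_apply_eq_iff, Equiv.swap_apply_left]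

variable {K : Type*} [Field K] [NeZero (2 : K)]

/-- With `P` the permutation matrix of the transposition `(a b)` and `D` the reflection in the
`a`-th coordinate, `single a b 1 = (P - D * P) / 2`. -/
theorem span_orthogonalGroup_eq_top :
    Submodule.span K (orthogonalGroup ι K : Set (Matrix ι ι K)) = ⊤ := by
  refine eq_top_iff.2 fun A _ => ?_
  rw [matrix_eq_sum_single A]
  refine Submodule.sum_mem _ fun a _ => Submodule.sum_mem _ fun b _ => ?_
  set P := (Equiv.swap a b).permMatrix K
  set D : Matrix ι ι K := 1 - (2 : K) • single a a 1
  have hP : P ∈ orthogonalGroup ι K := permMatrix_mem_orthogonalGroup _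
  have hDP : D * P ∈ orthogonalGroup ι K :=
    mul_mem (one_sub_two_smul_single_mem_orthogonalGroup a) hP
  have hA : single a b (A a b) = (A a b / 2) • (P - D * P) := by
    rw [sub_mul, one_mul, smul_mul_assoc, single_mul_permMatrix_swap, sub_sub_cancel, smul_smul,
      div_mul_cancel₀ _ two_ne_zero, smul_single, smul_eq_mul, mul_one]
  rw [hA]
  exact Submodule.smul_mem _ _ <|
    Submodule.sub_mem _ (Submodule.subset_span hP) (Submodule.subset_span hDP)

variable [DecidableEq κ]

theorem span_sandwich_orthogonalGroup_eq_top :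
    Submodule.span K (Set.image2 (fun u v => sandwich K u v)
      (orthogonalGroup ι K : Set (Matrix ι ι K)) (orthogonalGroup κ K : Set (Matrix κ κ K))) =
      ⊤ := by
  rw [← Submodule.map₂_span_span, span_orthogonalGroup_eq_top, span_orthogonalGroup_eq_top,
    map₂_sandwich_top_top]

theorem exists_sum_smul_orthogonal_sandwich_eq (T : Module.End K (Matrix ι κ K)) :
    ∃ (N : ℕ) (r : Fin N → K) (u : Fin N → orthogonalGroup ι K)
      (v : Fin N → orthogonalGroup κ K),
      ∀ X, ∑ j, r j • ((u j : Matrix ι ι K) * X * (v j : Matrix κ κ K)) = T X := by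
  obtain ⟨N, r, g, hg⟩ := Submodule.mem_span_set'.1
    ((span_sandwich_orthogonalGroup_eq_top (K := K)).ge (Submodule.mem_top (x := T)))
  choose u hu v hv huv using fun j => (g j).2
  refine ⟨N, r, fun j => ⟨u j, hu j⟩, fun j => ⟨v j, hv j⟩, fun X => ?_⟩
  simp_rw [← hg, LinearMap.sum_apply, LinearMap.smul_apply, ← huv, sandwich_apply]

end Orthogonal

end Matrix

/-- Given `k` ℝ-linearly independent real `n×m` matrices, there is a simultaneous
fluctuation by orthogonal matrices killing all but the first one. -/
theorem exists_fluctuation_isolating_first (n m k : ℕ) (hk : 0 < k)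
    (M : Fin k → Matrix (Fin n) (Fin m) ℝ) (hM : LinearIndependent ℝ M) :
    ∃ (J : Type) (_ : Fintype J) (r : J → ℝ)
      (u : J → Matrix.orthogonalGroup (Fin n) ℝ)
      (v : J → Matrix.orthogonalGroup (Fin m) ℝ),
      (∑ j, r j • ((u j : Matrix (Fin n) (Fin n) ℝ) * M ⟨0, hk⟩ *
          (v j : Matrix (Fin m) (Fin m) ℝ))) ≠ 0 ∧
      ∀ i : Fin k, i ≠ ⟨0, hk⟩ →
        (∑ j, r j • ((u j : Matrix (Fin n) (Fin n) ℝ) * M i *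
            (v j : Matrix (Fin m) (Fin m) ℝ))) = 0 := by
  obtain ⟨φ, hφ₀, hφ⟩ := hM.exists_dual_ne_zero_and_eq_zero ⟨0, hk⟩
  obtain ⟨N, r, u, v, hT⟩ :=
    Matrix.exists_sum_smul_orthogonal_sandwich_eq (φ.smulRight (M ⟨0, hk⟩))
  refine ⟨Fin N, inferInstance, r, u, v, ?_, fun i hi => ?_⟩
  · rw [hT, LinearMap.smulRight_apply]
    exact smul_ne_zero hφ₀ (hM.ne_zero _)
  · rw [hT, LinearMap.smulRight_apply, hφ i hi, zero_smul]
end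

section
/- There exist complex column vectors M_1 = (i,1)ᵀ and M_2 = (1,0)ᵀ in M_{2×1}(ℂ) that are ℝ-linearly (and ℂ-linearly) independent, but such that for any fluctuation f with real coefficients and real orthogonal matrices, M_1^f = 0 implies M_2^f = 0. -/
/-- The column vectors `M₁ = (i,1)ᵀ`, `M₂ = (1,0)ᵀ` are ℝ- and ℂ-linearly independent,
yet every real fluctuation (by real orthogonal matrices) annihilating `M₁` also
annihilates `M₂`. -/
theorem real_fluctuation_counterexample :
    ∃ M₁ M₂ : Matrix (Fin 2) (Fin 1) ℂ,
      M₁ = !![Complex.I; 1] ∧ M₂ = !![1; 0] ∧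
      LinearIndependent ℝ ![M₁, M₂] ∧
      LinearIndependent ℂ ![M₁, M₂] ∧
      ∀ (J : Type) (_ : Fintype J) (r : J → ℝ)
        (u : J → Matrix.orthogonalGroup (Fin 2) ℝ)
        (v : J → Matrix.orthogonalGroup (Fin 1) ℝ),
        (∑ j, r j • (((u j : Matrix (Fin 2) (Fin 2) ℝ)).map (Complex.ofReal) * M₁ *
            ((v j : Matrix (Fin 1) (Fin 1) ℝ)).map (Complex.ofReal))) = 0 →
        (∑ j, r j • (((u j : Matrix (Fin 2) (Fin 2) ℝ)).map (Complex.ofReal) * M₂ *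
            ((v j : Matrix (Fin 1) (Fin 1) ℝ)).map (Complex.ofReal))) = 0 := by
  refine ⟨!![Complex.I; 1], !![1; 0], rfl, rfl, ?_, ?_, ?_⟩
  · rw [LinearIndependent.pair_iff]
    intro s t hst
    have h1 := congrFun (congrFun hst 1) 0
    have h0 := congrFun (congrFun hst 0) 0
    simp at h1 h0
    refine ⟨h1, ?_⟩
    simp [h1, Complex.ext_iff] at h0
    exact h0
  · rw [LinearIndependent.pair_iff]
    intro s t hst
    have h1 := congrFun (congrFun hst 1) 0
    have h0 := congrFun (congrFun hst 0) 0
    simp at h1 h0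
    constructor
    · exact h1
    · simpa [h1] using h0
  · intro J _ r u v h
    ext i k
    fin_cases k
    have hi := congrFun (congrFun h i) 0
    simp [Matrix.sum_apply, Matrix.mul_apply, Fin.sum_univ_two, Fin.sum_univ_one,
      Complex.real_smul] at hi ⊢
    -- hi should be : ∑ j, ↑(r j) * ((↑(u j i 0) * I + ↑(u j i 1)) * ↑(v j 0 0)) = 0
    have hrw : (∑ j, (r j : ℂ) * ((((u j : Matrix (Fin 2) (Fin 2) ℝ) i 0 : ℂ) * Complex.I +
          ((u j : Matrix (Fin 2) (Fin 2) ℝ) i 1 : ℂ)) *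
          ((v j : Matrix (Fin 1) (Fin 1) ℝ) 0 0 : ℂ)))
        = Complex.I * ((∑ j, r j * (u j : Matrix (Fin 2) (Fin 2) ℝ) i 0 *
            (v j : Matrix (Fin 1) (Fin 1) ℝ) 0 0 : ℝ) : ℂ)
          + ((∑ j, r j * (u j : Matrix (Fin 2) (Fin 2) ℝ) i 1 *
            (v j : Matrix (Fin 1) (Fin 1) ℝ) 0 0 : ℝ) : ℂ) := by
      push_cast
      rw [Finset.mul_sum, ← Finset.sum_add_distrib]
      apply Finset.sum_congr rfl
      intro j _
      ring
    rw [hrw] at hi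
    have hS : (∑ j, r j * (u j : Matrix (Fin 2) (Fin 2) ℝ) i 0 *
        (v j : Matrix (Fin 1) (Fin 1) ℝ) 0 0) = 0 := by
      have := congrArg Complex.im hi
      simpa using this
    have hgoal : (∑ j, (r j : ℂ) * (((u j : Matrix (Fin 2) (Fin 2) ℝ) i 0 : ℂ) *
          ((v j : Matrix (Fin 1) (Fin 1) ℝ) 0 0 : ℂ)))
        = ((∑ j, r j * (u j : Matrix (Fin 2) (Fin 2) ℝ) i 0 *
            (v j : Matrix (Fin 1) (Fin 1) ℝ) 0 0 : ℝ) : ℂ) := by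
      push_cast
      exact Finset.sum_congr rfl fun j _ => by ring
    rw [hgoal, hS]
    simp
end

section
/- Let M_1, M_2 ∈ M_n(ℂ) be skewsymmetric matrices. If for every symmetric fluctuation f^T (a finite family of real coefficients r_j and unitaries u_j ∈ U(n)) the condition Σ_j r_j u_j M_1 u_jᵀ = 0 implies Σ_j r_j u_j M_2 u_jᵀ = 0, then M_2 = c M_1 for some complex constant c. -/
/-!
Call a map `φ : X ↦ ∑ⱼ rⱼ uⱼ X uⱼᵀ` a symmetric fluctuation. These maps are closed under sums and
composition, and they include `X ↦ z • X` for every `z : ℂ` (write `z = ‖z‖ μ²` with `|μ| = 1`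
and conjugate by the scalar unitary `μ`), the relabellings `X ↦ X.submatrix σ σ` (conjugate by
a permutation matrix), and, for `a ≠ b`, the projection keeping only the entries `(a, b)` and
`(b, a)` (average the conjugates by the diagonal sign matrices). Hence for every linear relation
`z * M₁ a b + w * M₁ c d = 0` the map `X ↦ pairPart a b (z • X + w • X.submatrix σ σ)`, with
`σ a = c` and `σ b = d`, annihilates the skewsymmetric `M₁`, so it annihilates `M₂`, and the
same relation holds for the entries of `M₂`. Applied to `z = M₁ p q`, `w = -M₁ i j` this gives
`M₁ p q * M₂ i j = M₁ i j * M₂ p q`, i.e. `M₂` is a multiple of `M₁`.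
-/

open Matrix

theorem Matrix.diagonal_mem_unitaryGroup {n 𝕜 : Type*} [Fintype n] [DecidableEq n] [RCLike 𝕜]
    {d : n → 𝕜} (hd : ∀ i, ‖d i‖ = 1) : diagonal d ∈ unitaryGroup n 𝕜 := by
  rw [mem_unitaryGroup_iff, star_eq_conjTranspose, diagonal_conjTranspose, diagonal_mul_diagonal,
    ← diagonal_one]
  congr 1
  ext i
  simp [RCLike.mul_conj, hd i]

theorem Matrix.permMatrix_mem_unitaryGroup {n α : Type*} [Fintype n] [DecidableEq n]
    [CommRing α] [StarRing α] (σ : Equiv.Perm n) : σ.permMatrix α ∈ unitaryGroup n α := by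
  rw [mem_unitaryGroup_iff, star_eq_conjTranspose, conjTranspose_permMatrix, ← permMatrix_mul,
    inv_mul_cancel, permMatrix_one]

theorem Matrix.apply_self_eq_zero_of_transpose_eq_neg {n α : Type*} [AddGroup α]
    [IsAddTorsionFree α] {M : Matrix n n α} (hM : Mᵀ = -M) (i : n) : M i i = 0 :=
  self_eq_neg.mp (congrFun₂ hM i i)

theorem Matrix.exists_eq_smul_of_mul_eq_mul {m n K : Type*} [Field K] {A B : Matrix m n K}
    (hA : A = 0 → B = 0) (hAB : ∀ i j p q, A p q * B i j = A i j * B p q) :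
    ∃ c : K, B = c • A := by
  by_cases hA0 : A = 0
  · exact ⟨0, by simp [hA hA0]⟩
  obtain ⟨p, q, hpq⟩ : ∃ p q, A p q ≠ 0 := by
    by_contra! h
    exact hA0 (Matrix.ext h)
  refine ⟨B p q / A p q, Matrix.ext fun i j => ?_⟩
  rw [smul_apply, smul_eq_mul, div_mul_eq_mul_div, eq_div_iff hpq]
  linear_combination hAB i j p q

theorem Equiv.Perm.exists_apply_eq_and_apply_eq {α : Type*} [DecidableEq α] {a b c d : α}
    (hab : a ≠ b) (hcd : c ≠ d) : ∃ σ : Equiv.Perm α, σ a = c ∧ σ b = d := by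
  have hae : a ≠ Equiv.swap a c d := fun h => hcd (by simpa using congrArg (Equiv.swap a c) h)
  refine ⟨Equiv.swap a c * Equiv.swap b (Equiv.swap a c d), ?_, ?_⟩
  · simp [Equiv.swap_apply_of_ne_of_ne hab hae]
  · simp

variable {n : Type*} [DecidableEq n]

def pairPart {R : Type*} [Zero R] (a b : n) (X : Matrix n n R) : Matrix n n R :=
  of fun i j => if (i = a ∧ j = b) ∨ (i = b ∧ j = a) then X i j else 0

theorem pairPart_eq_zero_of_transpose_eq_neg {R : Type*} [AddGroup R] {X : Matrix n n R} (hX : Xᵀ = -X) {a b : n}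
    (hab : X a b = 0) : pairPart a b X = 0 := by
  ext i j
  simp only [pairPart, of_apply, Matrix.zero_apply, ite_eq_right_iff]
  rintro (⟨rfl, rfl⟩ | ⟨rfl, rfl⟩)
  · exact hab
  · simpa [hab] using congrFun₂ hX i j

variable [Fintype n]

def IsSymmetricFluctuation (φ : Matrix n n ℂ → Matrix n n ℂ) : Prop :=
  ∃ (J : Type) (_ : Fintype J) (r : J → ℝ) (u : J → unitaryGroup n ℂ),
    ∀ X, φ X = ∑ j, r j • ((u j : Matrix n n ℂ) * X * (u j : Matrix n n ℂ)ᵀ)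

namespace IsSymmetricFluctuation

variable {φ ψ : Matrix n n ℂ → Matrix n n ℂ}

theorem add (hφ : IsSymmetricFluctuation φ) (hψ : IsSymmetricFluctuation ψ) :
    IsSymmetricFluctuation fun X => φ X + ψ X := by
  obtain ⟨J, _, r, u, hφ⟩ := hφ
  obtain ⟨K, _, s, v, hψ⟩ := hψ
  exact ⟨J ⊕ K, inferInstance, Sum.elim r s, Sum.elim u v, fun X => by
    simp [hφ, hψ, Fintype.sum_sum_type]⟩

theorem comp (hφ : IsSymmetricFluctuation φ) (hψ : IsSymmetricFluctuation ψ) :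
    IsSymmetricFluctuation (φ ∘ ψ) := by
  obtain ⟨J, _, r, u, hφ⟩ := hφ
  obtain ⟨K, _, s, v, hψ⟩ := hψ
  refine ⟨J × K, inferInstance, fun p => r p.1 * s p.2, fun p => u p.1 * v p.2, fun X => ?_⟩
  simp only [Function.comp_apply, hφ, hψ, Fintype.sum_prod_type, Finset.mul_sum, Finset.sum_mul,
    Finset.smul_sum, Matrix.mul_smul, Matrix.smul_mul, smul_smul, Submonoid.coe_mul,
    transpose_mul, Matrix.mul_assoc]

end IsSymmetricFluctuation

theorem isSymmetricFluctuation_smul (z : ℂ) :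
    IsSymmetricFluctuation (z • · : Matrix n n ℂ → Matrix n n ℂ) := by
  set μ := Complex.exp (z.arg / 2 * Complex.I)
  have hμ : μ * μ = Complex.exp (z.arg * Complex.I) := by
    rw [← Complex.exp_add]
    congr 1
    ring
  refine ⟨Unit, inferInstance, fun _ => ‖z‖,
    fun _ => ⟨diagonal fun _ => μ, diagonal_mem_unitaryGroup fun _ => ?_⟩, fun X => ?_⟩
  · simpa [μ] using Complex.norm_exp_ofReal_mul_I (z.arg / 2)
  · ext i j
    simp only [Finset.univ_unique, Finset.sum_singleton, diagonal_transpose, diagonal_mul,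
      mul_diagonal, Matrix.smul_apply, Complex.real_smul, smul_eq_mul]
    linear_combination (-(‖z‖ : ℂ) * X i j) * hμ - X i j * Complex.norm_mul_exp_arg_mul_I z

theorem isSymmetricFluctuation_submatrix (σ : Equiv.Perm n) :
    IsSymmetricFluctuation fun X : Matrix n n ℂ => X.submatrix σ σ := by
  refine ⟨Unit, inferInstance, fun _ => 1,
    fun _ => ⟨σ.permMatrix ℂ, permMatrix_mem_unitaryGroup σ⟩, fun X => ?_⟩
  simp [PEquiv.toMatrix_toPEquiv_mul, PEquiv.mul_toMatrix_toPEquiv, Equiv.Perm.inv_def]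

/-- `X ↦ (X - D X D) / 2`, where `D` flips the sign of the `a`-th coordinate. -/
theorem isSymmetricFluctuation_ite_iff (a : n) :
    IsSymmetricFluctuation fun X : Matrix n n ℂ =>
      of fun i j => if (i = a ↔ j = a) then 0 else X i j := by
  refine ⟨Bool, inferInstance, fun b => if b then 1 / 2 else -1 / 2,
    fun b => if b then 1 else ⟨diagonal fun i => if i = a then -1 else 1,
      diagonal_mem_unitaryGroup fun i => by split_ifs <;> simp⟩, fun X => ?_⟩
  ext i j
  by_cases hi : i = a <;> by_cases hj : j = a <;>
    simp [hi, hj, diagonal_mul, mul_diagonal] <;> ring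

theorem isSymmetricFluctuation_pairPart {a b : n} (hab : a ≠ b) :
    IsSymmetricFluctuation (pairPart a b) := by
  convert (isSymmetricFluctuation_ite_iff b).comp (isSymmetricFluctuation_ite_iff a) using 1
  ext X i j
  simp only [pairPart, Function.comp_apply, of_apply]
  by_cases hia : i = a <;> by_cases hja : j = a <;> by_cases hib : i = b <;> by_cases hjb : j = b <;>
    simp_all

section Annihilation

variable {M₁ M₂ : Matrix n n ℂ}
  (hann : ∀ φ, IsSymmetricFluctuation φ → φ M₁ = 0 → φ M₂ = 0)
include hann

theorem mul_add_mul_eq_zero_of_forall_isSymmetricFluctuation (h₁ : M₁ᵀ = -M₁) {a b c d : n}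
    (hab : a ≠ b) (hcd : c ≠ d) {z w : ℂ} (hzw : z * M₁ a b + w * M₁ c d = 0) :
    z * M₂ a b + w * M₂ c d = 0 := by
  obtain ⟨σ, hσa, hσb⟩ := Equiv.Perm.exists_apply_eq_and_apply_eq hab hcd
  have hφ := (isSymmetricFluctuation_pairPart hab).comp
    ((isSymmetricFluctuation_smul z).add
      ((isSymmetricFluctuation_smul w).comp (isSymmetricFluctuation_submatrix σ)))
  have hφM₁ : pairPart a b (z • M₁ + w • M₁.submatrix σ σ) = 0 := by
    refine pairPart_eq_zero_of_transpose_eq_neg ?_ (by simpa [hσa, hσb] using hzw)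
    rw [transpose_add, transpose_smul, transpose_smul, transpose_submatrix, h₁, neg_add,
      ← smul_neg, ← smul_neg]
    rfl
  simpa [pairPart, hσa, hσb] using congrFun₂ (hann _ hφ hφM₁) a b

end Annihilation

/-- If every symmetric fluctuation annihilating the skewsymmetric matrix `M₁` also
annihilates the skewsymmetric matrix `M₂`, then `M₂` is ℂ-colinear to `M₁`. -/
theorem skew_colinear_of_symmetric_fluctuations (n : ℕ)
    (M₁ M₂ : Matrix (Fin n) (Fin n) ℂ)
    (h₁ : M₁.transpose = -M₁) (h₂ : M₂.transpose = -M₂)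
    (h : ∀ (J : Type) (_ : Fintype J) (r : J → ℝ)
      (u : J → Matrix.unitaryGroup (Fin n) ℂ),
      (∑ j, r j • ((u j : Matrix (Fin n) (Fin n) ℂ) * M₁ *
          ((u j : Matrix (Fin n) (Fin n) ℂ)).transpose)) = 0 →
      (∑ j, r j • ((u j : Matrix (Fin n) (Fin n) ℂ) * M₂ *
          ((u j : Matrix (Fin n) (Fin n) ℂ)).transpose)) = 0) :
    ∃ c : ℂ, M₂ = c • M₁ := by
  have hann : ∀ φ, IsSymmetricFluctuation φ → φ M₁ = 0 → φ M₂ = 0 := by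
    rintro φ ⟨J, _, r, u, hφ⟩ hφM₁
    rw [hφ] at hφM₁ ⊢
    exact h J _ r u hφM₁
  have hdiag₁ := apply_self_eq_zero_of_transpose_eq_neg h₁
  have hdiag₂ := apply_self_eq_zero_of_transpose_eq_neg h₂
  refine exists_eq_smul_of_mul_eq_mul (fun hM₁ => Matrix.ext fun i j => ?_) fun i j p q => ?_
  · rcases eq_or_ne i j with rfl | hij
    · exact hdiag₂ i
    simpa using mul_add_mul_eq_zero_of_forall_isSymmetricFluctuation hann h₁ hij hij.symm
      (z := 1) (w := 0) (by simp [hM₁])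
  · rcases eq_or_ne i j with rfl | hij
    · simp [hdiag₁, hdiag₂]
    rcases eq_or_ne p q with rfl | hpq
    · simp [hdiag₁, hdiag₂]
    linear_combination mul_add_mul_eq_zero_of_forall_isSymmetricFluctuation hann h₁ hij hpq
      (z := M₁ p q) (w := -M₁ i j) (by ring)
end

section
/- Let X, Y, Z be complex n×n matrices with X, Y Hermitian positive semidefinite, satisfying X = 2X² + XY + ZZ* and Y = 2Y² + XY + Z*Z. Then X and Y commute, and 2(X−Y)(X+Y−(1/2)·1_n) = [Z*, Z]. -/
open ComplexOrder

/-- If `X, Y` are positive semidefinite with `X = 2X² + XY + ZZ*` and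
`Y = 2Y² + XY + Z*Z`, then `X` and `Y` commute and
`2(X−Y)(X+Y−(1/2)·1) = [Z*, Z]`. -/
theorem commute_and_commutator_relation (n : ℕ)
    (X Y Z : Matrix (Fin n) (Fin n) ℂ)
    (hX : X.PosSemidef) (hY : Y.PosSemidef)
    (hXeq : X = 2 • X ^ 2 + X * Y + Z * Z.conjTranspose)
    (hYeq : Y = 2 • Y ^ 2 + X * Y + Z.conjTranspose * Z) :
    X * Y = Y * X ∧
    2 • ((X - Y) * (X + Y - (1 / 2 : ℂ) • (1 : Matrix (Fin n) (Fin n) ℂ))) =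
      Z.conjTranspose * Z - Z * Z.conjTranspose := by
  have hXh : X.conjTranspose = X := hX.1
  have hYh : Y.conjTranspose = Y := hY.1
  have h := congrArg Matrix.conjTranspose hXeq
  simp only [Matrix.conjTranspose_add, Matrix.conjTranspose_smul,
    Matrix.conjTranspose_mul, Matrix.conjTranspose_pow, hXh, hYh,
    Matrix.conjTranspose_conjTranspose] at h
  -- h : X = 2 • X ^ 2 + Y * X + Z * Zᴴ
  have hc : X * Y = Y * X := by
    have h2 : 2 • X ^ 2 + X * Y + Z * Z.conjTranspose
        = 2 • X ^ 2 + Y * X + Z * Z.conjTranspose := hXeq.symm.trans h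
    exact add_left_cancel (add_right_cancel h2)
  refine ⟨hc, ?_⟩
  have hsub : X - Y = 2 • X ^ 2 - 2 • Y ^ 2 + (Z * Z.conjTranspose - Z.conjTranspose * Z) := by
    calc X - Y = (2 • X ^ 2 + X * Y + Z * Z.conjTranspose)
        - (2 • Y ^ 2 + X * Y + Z.conjTranspose * Z) := by rw [← hXeq, ← hYeq]
      _ = _ := by abel
  have h2 : (2:ℕ) • ((1/2 : ℂ) • (X - Y)) = X - Y := by
    rw [← Nat.cast_smul_eq_nsmul ℂ, smul_smul]
    norm_num
  calc 2 • ((X - Y) * (X + Y - (1 / 2 : ℂ) • (1 : Matrix (Fin n) (Fin n) ℂ)))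
      = 2 • (X ^ 2 - Y ^ 2) - 2 • ((1/2 : ℂ) • (X - Y)) := by
        rw [← smul_sub]
        congr 1
        rw [mul_sub, Matrix.mul_smul, mul_one, sub_mul, mul_add, mul_add, hc,
          ← pow_two, ← pow_two]
        abel
    _ = 2 • X ^ 2 - 2 • Y ^ 2 - (X - Y) := by rw [h2, smul_sub]
    _ = Z.conjTranspose * Z - Z * Z.conjTranspose := by rw [hsub]; abel
end

section
/- Let M_1, M_2 ∈ M_n(ℂ) be skewsymmetric matrices satisfying the critical point equations M_1 = 2 M_1 M_1* M_1 + M_1 M_2* M_2 + M_2 M_2* M_1 and M_2 = 2 M_2 M_2* M_2 + M_2 M_1* M_1 + M_1 M_1* M_2. Then the spectrum of the positive semidefinite matrix M_1* M_1 + M_2* M_2 is degenerate, i.e., it has a repeated eigenvalue (for n ≥ 2). -/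
/-!
Let `A = M₁ᴴM₁ + M₂ᴴM₂` and suppose its spectrum is simple. For skew-symmetric `Mᵢ` we have
`Aᵀ = M₁M₁ᴴ + M₂M₂ᴴ`, so the critical point equations read `Mᵢ A + Aᵀ Mᵢ = Mᵢ`. They make `A`
commute with each `MᵢᴴMᵢ`, and they make the antilinear map `Jᵢ v = Mᵢᴴ v̄` (`conjMulVec`) send
`μ`-eigenvectors of `A` to `(1 - μ)`-eigenvectors. As `Jᵢ² = -MᵢᴴMᵢ` is negative semidefinite,
`Jᵢ` preserves the line of an eigenvector `v` only if `Mᵢ v = 0`; so `μ = 1/2` forces `Mᵢ v = 0`.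
If `M₁ v` and `M₂ v` were both nonzero, `J₁ v` and `J₂ v` would span one line, on which `A` acts
by `μ` and by `1 - μ`, giving `μ = 1/2`. If only `M₁ v` were nonzero, applying this dichotomy to
the eigenvector `J₁ v` again leads to `μ = 1/2`. So both `Mᵢ` kill every eigenvector of `A`,
hence `A = 0`, whose spectrum is not simple once `n ≥ 2`.
-/

open Matrix Module

section SimpleSpectrum

variable {K ι : Type*} [Field K] [Fintype ι] [DecidableEq ι]

def HasSimpleSpectrum (A : Matrix ι ι K) : Prop :=
  ∀ c : K, finrank K (End.eigenspace (toLin' A) c) ≤ 1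

theorem HasSimpleSpectrum.exists_smul_eq {A : Matrix ι ι K} (hA : HasSimpleSpectrum A)
    {c : K} {v w : ι → K} (hv : A *ᵥ v = c • v) (hw : A *ᵥ w = c • w) (hv0 : v ≠ 0) :
    ∃ t : K, t • v = w := by
  set E := End.eigenspace (toLin' A) c
  have hvE : v ∈ E := End.mem_eigenspace_iff.mpr (by rwa [toLin'_apply])
  have hwE : w ∈ E := End.mem_eigenspace_iff.mpr (by rwa [toLin'_apply])
  have hE : finrank K E = 1 := by
    refine le_antisymm (hA c) (Nat.one_le_iff_ne_zero.mpr fun h => hv0 ?_)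
    simpa using (Submodule.finrank_eq_zero.mp h ▸ hvE : v ∈ (⊥ : Submodule K (ι → K)))
  obtain ⟨t, ht⟩ := exists_smul_eq_of_finrank_eq_one hE (x := ⟨v, hvE⟩) (by simpa using hv0)
    ⟨w, hwE⟩
  exact ⟨t, congrArg Subtype.val ht⟩

theorem HasSimpleSpectrum.exists_mulVec_eq_smul_of_commute {A N : Matrix ι ι K}
    (hA : HasSimpleSpectrum A) (hAN : Commute A N) {c : K} {v : ι → K}
    (hv : A *ᵥ v = c • v) (hv0 : v ≠ 0) : ∃ α : K, N *ᵥ v = α • v := by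
  refine (hA.exists_smul_eq hv ?_ hv0).imp fun _ h => h.symm
  rw [mulVec_mulVec, hAN.eq, ← mulVec_mulVec, hv, mulVec_smul]

theorem card_le_one_of_hasSimpleSpectrum_zero (h : HasSimpleSpectrum (0 : Matrix ι ι K)) :
    Fintype.card ι ≤ 1 := by
  have h0 := h 0
  rwa [End.eigenspace_zero, map_zero, LinearMap.ker_zero, finrank_top,
    finrank_fintype_fun_eq_card] at h0

end SimpleSpectrum

section ConjMulVec

variable {R ι : Type*} [CommRing R] [StarRing R] [Fintype ι]

def conjMulVec (M : Matrix ι ι R) (v : ι → R) : ι → R := Mᴴ *ᵥ star v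

theorem conjMulVec_smul (M : Matrix ι ι R) (c : R) (v : ι → R) :
    conjMulVec M (c • v) = star c • conjMulVec M v := by
  rw [conjMulVec, conjMulVec, star_smul, mulVec_smul]

variable {M : Matrix ι ι R}

theorem conjMulVec_eq_neg_star_mulVec (hM : Mᵀ = -M) (v : ι → R) :
    conjMulVec M v = -star (M *ᵥ v) := by
  rw [conjMulVec, ← star_vecMul, ← mulVec_transpose, hM, neg_mulVec, star_neg]

theorem transpose_conjTranspose_mul_self (hM : Mᵀ = -M) : (Mᴴ * M)ᵀ = M * Mᴴ := by
  rw [transpose_mul, ← conjTranspose_transpose_eq_transpose_conjTranspose, hM, conjTranspose_neg,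
    neg_mul_neg]

theorem conjMulVec_eq_zero_iff (hM : Mᵀ = -M) {v : ι → R} :
    conjMulVec M v = 0 ↔ M *ᵥ v = 0 := by
  rw [conjMulVec_eq_neg_star_mulVec hM, neg_eq_zero, star_eq_zero]

theorem conjMulVec_conjMulVec (hM : Mᵀ = -M) (v : ι → R) :
    conjMulVec M (conjMulVec M v) = -((Mᴴ * M) *ᵥ v) := by
  rw [conjMulVec_eq_neg_star_mulVec hM v, conjMulVec, star_neg, star_star, mulVec_neg,
    mulVec_mulVec]

theorem conjTranspose_mul_self_mulVec_conjMulVec (hM : Mᵀ = -M) (v : ι → R) :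
    (Mᴴ * M) *ᵥ conjMulVec M v = conjMulVec M ((Mᴴ * M) *ᵥ v) := by
  have h := conjMulVec_eq_neg_star_mulVec hM (conjMulVec M v)
  rw [conjMulVec_conjMulVec hM, neg_inj] at h
  rw [← mulVec_mulVec, ← star_star (M *ᵥ _), ← h, conjMulVec]

end ConjMulVec

section CriticalEquation

variable {R ι : Type*} [CommRing R] [StarRing R] [Fintype ι] {A M : Matrix ι ι R}

theorem conjTranspose_criticalEquation (hA : A.IsHermitian) (hM : M * A + Aᵀ * M = M) :
    A * Mᴴ + Mᴴ * Aᵀ = Mᴴ := by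
  simpa only [conjTranspose_add, conjTranspose_mul, hA.eq, hA.transpose.eq] using
    congrArg conjTranspose hM

theorem commute_conjTranspose_mul_self_of_criticalEquation (hA : A.IsHermitian)
    (hM : M * A + Aᵀ * M = M) : Commute A (Mᴴ * M) := by
  have hAM : Aᵀ * M = M - M * A := eq_sub_of_add_eq' hM
  have hMA : A * Mᴴ = Mᴴ - Mᴴ * Aᵀ := eq_sub_of_add_eq (conjTranspose_criticalEquation hA hM)
  calc A * (Mᴴ * M) = (Mᴴ - Mᴴ * Aᵀ) * M := by rw [← hMA, Matrix.mul_assoc]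
    _ = Mᴴ * M - Mᴴ * (M - M * A) := by rw [← hAM]; noncomm_ring
    _ = Mᴴ * M * A := by noncomm_ring

theorem mulVec_conjMulVec_of_criticalEquation (hA : A.IsHermitian) (hM : M * A + Aᵀ * M = M)
    {μ : R} (hμ : star μ = μ) {v : ι → R} (hv : A *ᵥ v = μ • v) :
    A *ᵥ conjMulVec M v = (1 - μ) • conjMulVec M v := by
  have hAv : Aᵀ *ᵥ star v = μ • star v := by
    rw [mulVec_transpose, ← hA.eq, ← star_mulVec, hv, star_smul, hμ]
  rw [conjMulVec, mulVec_mulVec, eq_sub_of_add_eq (conjTranspose_criticalEquation hA hM),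
    sub_mulVec, ← mulVec_mulVec, hAv, mulVec_smul, sub_smul, one_smul]

theorem criticalEquation_of_transpose_eq_neg {M₁ M₂ : Matrix ι ι R} (s₁ : M₁ᵀ = -M₁)
    (s₂ : M₂ᵀ = -M₂)
    (e : M₁ = 2 • (M₁ * M₁ᴴ * M₁) + M₁ * M₂ᴴ * M₂ + M₂ * M₂ᴴ * M₁) :
    M₁ * (M₁ᴴ * M₁ + M₂ᴴ * M₂) + (M₁ᴴ * M₁ + M₂ᴴ * M₂)ᵀ * M₁ = M₁ := by
  conv_rhs => rw [e]
  rw [transpose_add, transpose_conjTranspose_mul_self s₁, transpose_conjTranspose_mul_self s₂]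
  noncomm_ring

end CriticalEquation

open scoped ComplexOrder

section CriticalPair

variable {ι : Type*} [Fintype ι] [DecidableEq ι]

theorem mulVec_eq_zero_of_mulVec_eq_half_smul {A M : Matrix ι ι ℂ} (hs : HasSimpleSpectrum A)
    (hA : A.IsHermitian) (hM : M * A + Aᵀ * M = M) (hskew : Mᵀ = -M) {v : ι → ℂ} (hv0 : v ≠ 0)
    (hv : A *ᵥ v = (2⁻¹ : ℂ) • v) : M *ᵥ v = 0 := by
  have hJv : A *ᵥ conjMulVec M v = (2⁻¹ : ℂ) • conjMulVec M v := by
    rw [mulVec_conjMulVec_of_criticalEquation hA hM (by simp) hv]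
    norm_num
  obtain ⟨t, ht⟩ := hs.exists_smul_eq hv hJv hv0
  have hsq : (star t * t) • v = -((Mᴴ * M) *ᵥ v) := by
    rw [← conjMulVec_conjMulVec hskew, ← ht, conjMulVec_smul, ← ht, smul_smul]
  have hdot : star (M *ᵥ v) ⬝ᵥ (M *ᵥ v) = -(star t * t * (star v ⬝ᵥ v)) := by
    rw [star_mulVec, ← dotProduct_mulVec, mulVec_mulVec, ← neg_neg ((Mᴴ * M) *ᵥ v), ← hsq,
      dotProduct_neg, dotProduct_smul, smul_eq_mul]
  refine dotProduct_star_self_eq_zero.mp (le_antisymm ?_ (dotProduct_star_self_nonneg _))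
  rw [hdot, neg_nonpos]
  exact mul_nonneg (star_mul_self_nonneg t) (dotProduct_star_self_nonneg v)

variable {A M₁ M₂ : Matrix ι ι ℂ}

theorem mulVec_eq_zero_or_mulVec_eq_zero (hs : HasSimpleSpectrum A)
    (hA : A = M₁ᴴ * M₁ + M₂ᴴ * M₂) (k₁ : M₁ * A + Aᵀ * M₁ = M₁) (k₂ : M₂ * A + Aᵀ * M₂ = M₂)
    (s₁ : M₁ᵀ = -M₁) (s₂ : M₂ᵀ = -M₂) {μ : ℂ} (hμ : star μ = μ) {v : ι → ℂ}
    (hv : A *ᵥ v = μ • v) : M₁ *ᵥ v = 0 ∨ M₂ *ᵥ v = 0 := by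
  by_contra! h
  obtain ⟨h₁, h₂⟩ := h
  have hH : A.IsHermitian :=
    hA ▸ (isHermitian_conjTranspose_mul_self M₁).add (isHermitian_conjTranspose_mul_self M₂)
  have hv0 : v ≠ 0 := fun h => h₁ (by rw [h, mulVec_zero])
  obtain ⟨α₁, hα₁⟩ :=
    hs.exists_mulVec_eq_smul_of_commute
      (commute_conjTranspose_mul_self_of_criticalEquation hH k₁) hv hv0
  obtain ⟨α₂, hα₂⟩ :=
    hs.exists_mulVec_eq_smul_of_commute
      (commute_conjTranspose_mul_self_of_criticalEquation hH k₂) hv hv0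
  have hμα : μ = α₁ + α₂ := smul_left_injective ℂ hv0 <| by
    simp only [← hv, hA, add_mulVec, hα₁, hα₂, add_smul]
  have hw₁ := mulVec_conjMulVec_of_criticalEquation hH k₁ hμ hv
  have hw₂ := mulVec_conjMulVec_of_criticalEquation hH k₂ hμ hv
  obtain ⟨t, ht⟩ := hs.exists_smul_eq hw₁ hw₂ (by rwa [Ne, conjMulVec_eq_zero_iff s₁])
  have hAw₂ : A *ᵥ conjMulVec M₂ v = μ • conjMulVec M₂ v := by
    rw [hA, add_mulVec, conjTranspose_mul_self_mulVec_conjMulVec s₂, hα₂, conjMulVec_smul, ← ht,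
      mulVec_smul, conjTranspose_mul_self_mulVec_conjMulVec s₁, hα₁, conjMulVec_smul, smul_comm,
      ← add_smul, ← star_add, ← hμα, hμ]
  have hhalf : μ = 2⁻¹ := by
    have := smul_left_injective ℂ (by rwa [Ne, conjMulVec_eq_zero_iff s₂]) (hw₂.symm.trans hAw₂)
    linear_combination -this / 2
  exact h₁ (mulVec_eq_zero_of_mulVec_eq_half_smul hs hH k₁ s₁ hv0 (hhalf ▸ hv))

theorem mulVec_eq_zero_of_mulVec_eq_zero (hs : HasSimpleSpectrum A)
    (hA : A = M₁ᴴ * M₁ + M₂ᴴ * M₂) (k₁ : M₁ * A + Aᵀ * M₁ = M₁) (k₂ : M₂ * A + Aᵀ * M₂ = M₂)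
    (s₁ : M₁ᵀ = -M₁) (s₂ : M₂ᵀ = -M₂) {μ : ℂ} (hμ : star μ = μ) {v : ι → ℂ}
    (hv : A *ᵥ v = μ • v) (h₂ : M₂ *ᵥ v = 0) : M₁ *ᵥ v = 0 := by
  by_contra h₁
  have hH : A.IsHermitian :=
    hA ▸ (isHermitian_conjTranspose_mul_self M₁).add (isHermitian_conjTranspose_mul_self M₂)
  have hv0 : v ≠ 0 := fun h => h₁ (by rw [h, mulVec_zero])
  have hα : (M₁ᴴ * M₁) *ᵥ v = μ • v := by
    rw [← hv, hA, add_mulVec, (conjTranspose_mul_self_mulVec_eq_zero M₂ v).mpr h₂, add_zero]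
  set w := conjMulVec M₁ v
  have hw0 : w ≠ 0 := by rwa [Ne, conjMulVec_eq_zero_iff s₁]
  have hAw : A *ᵥ w = (1 - μ) • w := mulVec_conjMulVec_of_criticalEquation hH k₁ hμ hv
  have hαw : (M₁ᴴ * M₁) *ᵥ w = μ • w := by
    rw [conjTranspose_mul_self_mulVec_conjMulVec s₁, hα, conjMulVec_smul, hμ]
  rcases mulVec_eq_zero_or_mulVec_eq_zero hs hA k₁ k₂ s₁ s₂ (by simp [hμ]) hAw with hw | hw
  · have hμ0 : μ = 0 := by
      rw [(conjTranspose_mul_self_mulVec_eq_zero M₁ w).mpr hw, eq_comm, smul_eq_zero] at hαw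
      exact hαw.resolve_right hw0
    exact h₁ ((conjTranspose_mul_self_mulVec_eq_zero M₁ v).mp (by rw [hα, hμ0, zero_smul]))
  · have hhalf : μ = 2⁻¹ := by
      have hAw' : A *ᵥ w = μ • w := by
        rw [hA, add_mulVec, hαw, (conjTranspose_mul_self_mulVec_eq_zero M₂ w).mpr hw, add_zero]
      have := smul_left_injective ℂ hw0 (hAw.symm.trans hAw')
      linear_combination -this / 2
    exact h₁ (mulVec_eq_zero_of_mulVec_eq_half_smul hs hH k₁ s₁ hv0 (hhalf ▸ hv))

theorem eigenvalue_eq_zero_of_hasSimpleSpectrum (hs : HasSimpleSpectrum A)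
    (hA : A = M₁ᴴ * M₁ + M₂ᴴ * M₂) (k₁ : M₁ * A + Aᵀ * M₁ = M₁) (k₂ : M₂ * A + Aᵀ * M₂ = M₂)
    (s₁ : M₁ᵀ = -M₁) (s₂ : M₂ᵀ = -M₂) {μ : ℂ} (hμ : star μ = μ) {v : ι → ℂ} (hv0 : v ≠ 0)
    (hv : A *ᵥ v = μ • v) : μ = 0 := by
  have hA' : A = M₂ᴴ * M₂ + M₁ᴴ * M₁ := hA.trans (add_comm _ _)
  obtain ⟨h₁, h₂⟩ : M₁ *ᵥ v = 0 ∧ M₂ *ᵥ v = 0 := by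
    rcases mulVec_eq_zero_or_mulVec_eq_zero hs hA k₁ k₂ s₁ s₂ hμ hv with h₁ | h₂
    · exact ⟨h₁, mulVec_eq_zero_of_mulVec_eq_zero hs hA' k₂ k₁ s₂ s₁ hμ hv h₁⟩
    · exact ⟨mulVec_eq_zero_of_mulVec_eq_zero hs hA k₁ k₂ s₁ s₂ hμ hv h₂, h₂⟩
  refine (smul_eq_zero.mp ?_).resolve_right hv0
  rw [← hv, hA, add_mulVec, (conjTranspose_mul_self_mulVec_eq_zero M₁ v).mpr h₁,
    (conjTranspose_mul_self_mulVec_eq_zero M₂ v).mpr h₂, add_zero]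

end CriticalPair

theorem Matrix.IsHermitian.eq_zero_of_forall_eigenvalue_eq_zero {𝕜 ι : Type*} [RCLike 𝕜]
    [Fintype ι] [DecidableEq ι] {A : Matrix ι ι 𝕜} (hA : A.IsHermitian)
    (h : ∀ (μ : 𝕜) (v : ι → 𝕜), star μ = μ → v ≠ 0 → A *ᵥ v = μ • v → μ = 0) : A = 0 := by
  refine hA.eigenvalues_eq_zero_iff.mp (funext fun i => ?_)
  have hv := hA.mulVec_eigenvectorBasis i
  rw [RCLike.real_smul_eq_coe_smul (K := 𝕜)] at hv
  exact_mod_cast h _ _ (by simp) (by simpa using hA.eigenvectorBasis.orthonormal.ne_zero i) hv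

/-- For skewsymmetric `M₁, M₂` satisfying the critical point equations, the spectrum of
`M₁*M₁ + M₂*M₂` is degenerate: some eigenvalue has multiplicity at least `2` (for `n ≥ 2`). -/
theorem skew_critical_point_spectrum_degenerate (n : ℕ) (hn : 2 ≤ n)
    (M₁ M₂ : Matrix (Fin n) (Fin n) ℂ)
    (h₁ : M₁.transpose = -M₁) (h₂ : M₂.transpose = -M₂)
    (e₁ : M₁ = 2 • (M₁ * M₁.conjTranspose * M₁) + M₁ * M₂.conjTranspose * M₂ +
        M₂ * M₂.conjTranspose * M₁)
    (e₂ : M₂ = 2 • (M₂ * M₂.conjTranspose * M₂) + M₂ * M₁.conjTranspose * M₁ +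
        M₁ * M₁.conjTranspose * M₂) :
    ∃ c : ℂ, 2 ≤ Module.finrank ℂ
      (Module.End.eigenspace
        (Matrix.toLin' (M₁.conjTranspose * M₁ + M₂.conjTranspose * M₂)) c) := by
  set A := M₁ᴴ * M₁ + M₂ᴴ * M₂ with hA
  have k₁ : M₁ * A + Aᵀ * M₁ = M₁ := criticalEquation_of_transpose_eq_neg h₁ h₂ e₁
  have k₂ : M₂ * A + Aᵀ * M₂ = M₂ := by
    simpa only [A, add_comm (M₂ᴴ * M₂)] using criticalEquation_of_transpose_eq_neg h₂ h₁ e₂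
  by_contra! hs
  replace hs : HasSimpleSpectrum A := fun c => Nat.le_of_lt_succ (hs c)
  have hA0 : A = 0 :=
    ((isHermitian_conjTranspose_mul_self M₁).add (isHermitian_conjTranspose_mul_self M₂)
      ).eq_zero_of_forall_eigenvalue_eq_zero fun _ _ hμ hv0 hv =>
        eigenvalue_eq_zero_of_hasSimpleSpectrum hs hA k₁ k₂ h₁ h₂ hμ hv0 hv
  have hcard := card_le_one_of_hasSimpleSpectrum_zero (hA0 ▸ hs)
  rw [Fintype.card_fin] at hcard
  omega
end
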